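/- Let T : X → X be a self-adjoint positive definite linear operator (⟨Tu, u⟩ > 0 for all u ≠ 0) with ‖T⁻¹‖ < 1 (operator norm), let b ∈ X, and let x̄ be the unique solution of P_K(x) + Tx = b. Then for every x ∈ X and every V ∈ ∂_C P_K(x), the operator V + T is invertible, and every x⁺ ∈ X with (V + T)x⁺ = b satisfies ‖x⁺ − x̄‖ ≤ ‖T⁻¹‖ ‖x − x̄‖; hence the semi-smooth Newton sequence defined by (V(x^k) + T)x^{k+1} = b converges Q-linearly to x̄ from any starting point. -/

import Mathlib

open RealInnerProductSpace Filter Topology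

variable {X : Type*} [NormedAddCommGroup X] [InnerProductSpace ℝ X] [FiniteDimensional ℝ X]

/-- The Clarke generalized Jacobian of a map `F : X → X` at `x`: the convex hull of all
limits of Fréchet derivatives of `F` along sequences of differentiability points
converging to `x`. -/
def clarkeJacobian (F : X → X) (x : X) : Set (X →L[ℝ] X) :=
  convexHull ℝ {V : X →L[ℝ] X | ∃ u : ℕ → X,
    (∀ k, DifferentiableAt ℝ F (u k)) ∧
    Tendsto u atTop (𝓝 x) ∧
    Tendsto (fun k => fderiv ℝ F (u k)) atTop (𝓝 V)}

/-- `P` is the metric projection onto `K`: `P z` belongs to `K` and is a nearest point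
of `K` to `z`. -/
def IsMetricProjection (K : Set X) (P : X → X) : Prop :=
  ∀ z : X, P z ∈ K ∧ ∀ y ∈ K, ‖z - P z‖ ≤ ‖z - y‖

set_option linter.unusedSectionVars false

theorem proj_obtuse {K : Set X} {P : X → X} (hconv : Convex ℝ K)
    (hP : IsMetricProjection K P) (z : X) {y : X} (hy : y ∈ K) :
    ⟪z - P z, y - P z⟫ ≤ 0 := by
  have key : ∀ t ∈ Set.Ioc (0:ℝ) 1, ⟪z - P z, y - P z⟫ ≤ t / 2 * ‖y - P z‖ ^ 2 := by
    intro t ht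
    have hmem : (1 - t) • P z + t • y ∈ K :=
      hconv (hP z).1 hy (by linarith [ht.2]) (le_of_lt ht.1) (by ring)
    have h1 : ‖z - P z‖ ≤ ‖z - ((1 - t) • P z + t • y)‖ := (hP z).2 _ hmem
    have h2 : z - ((1 - t) • P z + t • y) = (z - P z) - t • (y - P z) := by
      module
    rw [h2] at h1
    have h3 : ‖(z - P z) - t • (y - P z)‖ ^ 2
        = ‖z - P z‖ ^ 2 - 2 * (t * ⟪z - P z, y - P z⟫) + t ^ 2 * ‖y - P z‖ ^ 2 := by
      rw [norm_sub_sq_real, real_inner_smul_right, norm_smul]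
      simp [mul_pow]
    have h4 : ‖z - P z‖ ^ 2 ≤ ‖(z - P z) - t • (y - P z)‖ ^ 2 := by
      nlinarith [norm_nonneg (z - P z), norm_nonneg ((z - P z) - t • (y - P z))]
    rw [h3] at h4
    have ht0 := ht.1
    nlinarith
  have hlim : Tendsto (fun t : ℝ => t / 2 * ‖y - P z‖ ^ 2) (𝓝[>] (0:ℝ)) (𝓝 0) := by
    have h : Continuous (fun t : ℝ => t / 2 * ‖y - P z‖ ^ 2) := by continuity
    have := h.tendsto (0:ℝ)
    simp only [zero_div, zero_mul] at this
    exact this.mono_left nhdsWithin_le_nhds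
  refine ge_of_tendsto hlim ?_
  filter_upwards [Ioc_mem_nhdsGT_of_mem (by norm_num : (0:ℝ) ∈ Set.Ico 0 1)] with t ht
  exact key t ht

theorem proj_firm {K : Set X} {P : X → X} (hconv : Convex ℝ K)
    (hP : IsMetricProjection K P) (z w : X) :
    ‖P z - P w‖ ^ 2 ≤ ⟪P z - P w, z - w⟫ := by
  have h1 := proj_obtuse hconv hP z (hP w).1
  have h2 := proj_obtuse hconv hP w (hP z).1
  have e : ⟪P z - P w, z - w⟫
      = ‖P z - P w‖ ^ 2 - ⟪z - P z, P w - P z⟫ - ⟪w - P w, P z - P w⟫ := by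
    simp only [inner_sub_left, inner_sub_right, real_inner_self_eq_norm_sq,
      norm_sub_sq_real]
    rw [real_inner_comm (P w) z, real_inner_comm (P w) (P z), real_inner_comm (P z) w,
      real_inner_comm (P z) z, real_inner_comm (P w) w]
    ring
  rw [e]
  linarith

theorem proj_lip {K : Set X} {P : X → X} (hconv : Convex ℝ K)
    (hP : IsMetricProjection K P) (z w : X) : ‖P z - P w‖ ≤ ‖z - w‖ := by
  have h := proj_firm hconv hP z w
  have h2 := real_inner_le_norm (P z - P w) (z - w)
  nlinarith [norm_nonneg (P z - P w), norm_nonneg (z - w)]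
set_option linter.unusedSectionVars false

theorem proj_unique {K : Set X} (hconv : Convex ℝ K) {z p q : X} (hp : p ∈ K) (hq : q ∈ K)
    (hpmin : ∀ y ∈ K, ‖z - p‖ ≤ ‖z - y‖) (hqmin : ∀ y ∈ K, ‖z - q‖ ≤ ‖z - y‖) : p = q := by
  have hm : (1/2 : ℝ) • p + (1/2 : ℝ) • q ∈ K :=
    hconv hp hq (by norm_num) (by norm_num) (by norm_num)
  have hpar := parallelogram_law_with_norm ℝ (z - p) (z - q)
  have hsum : (z - p) + (z - q) = (2:ℝ) • (z - ((1/2 : ℝ) • p + (1/2 : ℝ) • q)) := by module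
  have hdiff : (z - p) - (z - q) = q - p := by abel
  rw [hsum, hdiff, norm_smul] at hpar
  have h1 := hpmin _ hm
  have h2 := hqmin _ hm
  have h3 : ‖q - p‖ = 0 := by
    have hn := norm_nonneg (q - p)
    simp only [Real.norm_ofNat] at hpar
    nlinarith [norm_nonneg (z - p), norm_nonneg (z - q),
      norm_nonneg (z - ((1/2 : ℝ) • p + (1/2 : ℝ) • q))]
  exact (sub_eq_zero.mp (norm_eq_zero.mp h3)).symm

theorem proj_homog {K : Set X} (hne : K.Nonempty) (hconv : Convex ℝ K)
    (hcone : ∀ c : ℝ, 0 ≤ c → ∀ y ∈ K, c • y ∈ K)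
    {P : X → X} (hP : IsMetricProjection K P) {c : ℝ} (hc : 0 ≤ c) (z : X) :
    P (c • z) = c • P z := by
  rcases eq_or_lt_of_le hc with h0 | hpos
  · subst h0
    simp only [zero_smul]
    have h0K : (0:X) ∈ K := by
      obtain ⟨y, hy⟩ := hne
      simpa using hcone 0 le_rfl y hy
    have := (hP 0).2 0 h0K
    simp only [sub_zero, zero_sub, norm_neg, norm_zero] at this
    have : P 0 = 0 := by
      have hn := norm_nonneg (P 0)
      have : ‖P 0‖ = 0 := le_antisymm this hn
      exact norm_eq_zero.mp this
    exact this
  · refine proj_unique hconv (hP (c • z)).1 (hcone c hc _ (hP z).1) (hP (c • z)).2 ?_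
    intro y hy
    have hyc : c⁻¹ • y ∈ K := hcone c⁻¹ (by positivity) y hy
    have h1 : ‖z - P z‖ ≤ ‖z - c⁻¹ • y‖ := (hP z).2 _ hyc
    have e1 : c • z - c • P z = c • (z - P z) := by module
    have e2 : c • z - y = c • (z - c⁻¹ • y) := by
      rw [smul_sub, smul_inv_smul₀ (ne_of_gt hpos)]
    rw [e1, e2, norm_smul, norm_smul]
    exact mul_le_mul_of_nonneg_left h1 (abs_nonneg c)
theorem proj_N_nonexp {K : Set X} {P : X → X} (hconv : Convex ℝ K)
    (hP : IsMetricProjection K P) (z w : X) :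
    ‖((2:ℝ) • P z - z) - ((2:ℝ) • P w - w)‖ ≤ ‖z - w‖ := by
  have hfirm := proj_firm hconv hP z w
  have e : ((2:ℝ) • P z - z) - ((2:ℝ) • P w - w) = (2:ℝ) • (P z - P w) - (z - w) := by module
  rw [e]
  have hsq : ‖(2:ℝ) • (P z - P w) - (z - w)‖ ^ 2
      = 4 * ‖P z - P w‖ ^ 2 - 4 * ⟪P z - P w, z - w⟫ + ‖z - w‖ ^ 2 := by
    rw [norm_sub_sq_real, real_inner_smul_left, norm_smul]
    simp [mul_pow]
    ring
  nlinarith [norm_nonneg ((2:ℝ) • (P z - P w) - (z - w)), norm_nonneg (z - w)]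

theorem proj_combo {K : Set X} {P : X → X} (hconv : Convex ℝ K)
    (hP : IsMetricProjection K P) (z u : X) {t : ℝ} (ht0 : 0 ≤ t) (ht1 : t ≤ 1) :
    ‖t • P z + (1 - t) • P u - P (t • z + (1 - t) • u)‖ ≤ t * (1 - t) * ‖z - u‖ := by
  set m := t • z + (1 - t) • u with hm
  set N : X → X := fun a => (2:ℝ) • P a - a with hN
  have key : (2:ℝ) • (t • P z + (1 - t) • P u - P m)
      = t • (N z - N m) + (1 - t) • (N u - N m) := by
    simp only [hN, hm]
    module
  have h1 : ‖N z - N m‖ ≤ ‖z - m‖ := proj_N_nonexp hconv hP z m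
  have h2 : ‖N u - N m‖ ≤ ‖u - m‖ := proj_N_nonexp hconv hP u m
  have hz : z - m = (1 - t) • (z - u) := by simp only [hm]; module
  have hu : u - m = (-t) • (z - u) := by simp only [hm]; module
  have hnorm : (2:ℝ) * ‖t • P z + (1 - t) • P u - P m‖
      ≤ t * ((1 - t) * ‖z - u‖) + (1 - t) * (t * ‖z - u‖) := by
    calc (2:ℝ) * ‖t • P z + (1 - t) • P u - P m‖
        = ‖(2:ℝ) • (t • P z + (1 - t) • P u - P m)‖ := by
          rw [norm_smul]; simp
      _ = ‖t • (N z - N m) + (1 - t) • (N u - N m)‖ := by rw [key]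
      _ ≤ ‖t • (N z - N m)‖ + ‖(1 - t) • (N u - N m)‖ := norm_add_le _ _
      _ = t * ‖N z - N m‖ + (1 - t) * ‖N u - N m‖ := by
          rw [norm_smul, norm_smul, Real.norm_eq_abs, Real.norm_eq_abs,
            abs_of_nonneg ht0, abs_of_nonneg (by linarith : (0:ℝ) ≤ 1 - t)]
      _ ≤ t * ‖z - m‖ + (1 - t) * ‖u - m‖ := by
          gcongr <;> linarith
      _ = t * ((1 - t) * ‖z - u‖) + (1 - t) * (t * ‖z - u‖) := by
          rw [hz, hu, norm_smul, norm_smul, Real.norm_eq_abs, Real.norm_eq_abs,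
            abs_of_nonneg (by linarith : (0:ℝ) ≤ 1 - t), abs_neg, abs_of_nonneg ht0]
  linarith
theorem line_hasDerivAt {P : X → X} {u : X} (hD : DifferentiableAt ℝ P u) (v : X) :
    HasDerivAt (fun t : ℝ => P (u + t • v)) (fderiv ℝ P u v) 0 := by
  have h1 : HasDerivAt (fun t : ℝ => u + t • v) v 0 := by
    simpa using ((hasDerivAt_id (0:ℝ)).smul_const v).const_add u
  have h2 : HasFDerivAt P (fderiv ℝ P u) (u + (0:ℝ) • v) := by
    simpa using hD.hasFDerivAt
  exact h2.comp_hasDerivAt 0 h1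

theorem slope_tendsto {P : X → X} {u : X} (hD : DifferentiableAt ℝ P u) (v : X) :
    Tendsto (fun t : ℝ => t⁻¹ • (P (u + t • v) - P u)) (𝓝[>] (0:ℝ))
      (𝓝 (fderiv ℝ P u v)) := by
  have h := hasDerivAt_iff_tendsto_slope.mp (line_hasDerivAt hD v)
  have h2 : Tendsto (slope (fun t : ℝ => P (u + t • v)) 0) (𝓝[>] (0:ℝ))
      (𝓝 (fderiv ℝ P u v)) :=
    h.mono_left (nhdsWithin_mono _ (fun t ht => ne_of_gt ht))
  refine h2.congr (fun t => ?_)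
  simp [slope_def_module]

theorem proj_fderiv_est {K : Set X} {P : X → X} (hconv : Convex ℝ K)
    (hP : IsMetricProjection K P) {u : X} (hD : DifferentiableAt ℝ P u) (z : X) :
    ‖P z - P u - fderiv ℝ P u (z - u)‖ ≤ ‖z - u‖ := by
  set v := z - u with hv
  have hlim : Tendsto (fun t : ℝ => ‖P z - P u - t⁻¹ • (P (u + t • v) - P u)‖)
      (𝓝[>] (0:ℝ)) (𝓝 ‖P z - P u - fderiv ℝ P u v‖) :=
    ((slope_tendsto hD v).const_sub _).norm
  refine le_of_tendsto hlim ?_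
  filter_upwards [Ioc_mem_nhdsGT_of_mem (by norm_num : (0:ℝ) ∈ Set.Ico 0 1)] with t ht
  have ht0 : 0 < t := ht.1
  have ht1 : t ≤ 1 := ht.2
  have e1 : P z - P u - t⁻¹ • (P (u + t • v) - P u)
      = t⁻¹ • (t • P z + (1 - t) • P u - P (t • z + (1 - t) • u)) := by
    have : u + t • v = t • z + (1 - t) • u := by rw [hv]; module
    rw [this]
    have hne' : t ≠ 0 := ne_of_gt ht0
    match_scalars <;> (field_simp; try ring)
  rw [e1, norm_smul, Real.norm_eq_abs, abs_of_pos (by positivity)]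
  have := proj_combo hconv hP z u (le_of_lt ht0) ht1
  calc t⁻¹ * ‖t • P z + (1 - t) • P u - P (t • z + (1 - t) • u)‖
      ≤ t⁻¹ * (t * (1 - t) * ‖z - u‖) := by
        exact mul_le_mul_of_nonneg_left this (by positivity)
    _ = (1 - t) * ‖v‖ := by rw [hv]; field_simp
    _ ≤ ‖v‖ := by nlinarith [norm_nonneg v]

theorem proj_fderiv_psd {K : Set X} {P : X → X} (hconv : Convex ℝ K)
    (hP : IsMetricProjection K P) {u : X} (hD : DifferentiableAt ℝ P u) (e : X) :
    0 ≤ ⟪fderiv ℝ P u e, e⟫ := by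
  have hlim : Tendsto (fun t : ℝ => ⟪t⁻¹ • (P (u + t • e) - P u), e⟫)
      (𝓝[>] (0:ℝ)) (𝓝 ⟪fderiv ℝ P u e, e⟫) :=
    (slope_tendsto hD e).inner tendsto_const_nhds
  refine ge_of_tendsto hlim ?_
  filter_upwards [self_mem_nhdsWithin] with t (ht : 0 < t)
  have hfirm := proj_firm hconv hP (u + t • e) u
  have : (0:ℝ) ≤ ⟪P (u + t • e) - P u, t • e⟫ := by
    have : u + t • e - u = t • e := by abel
    rw [this] at hfirm
    nlinarith [norm_nonneg (P (u + t • e) - P u)]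
  rw [real_inner_smul_right] at this
  rw [real_inner_smul_left]
  have h2 : 0 ≤ ⟪P (u + t • e) - P u, e⟫ := by nlinarith
  exact mul_nonneg (by positivity) h2

theorem proj_fderiv_euler {K : Set X} (hne : K.Nonempty) {P : X → X} (hconv : Convex ℝ K)
    (hcone : ∀ c : ℝ, 0 ≤ c → ∀ y ∈ K, c • y ∈ K)
    (hP : IsMetricProjection K P) {u : X} (hD : DifferentiableAt ℝ P u) :
    fderiv ℝ P u u = P u := by
  have h1 : HasDerivAt (fun t : ℝ => P (u + t • u)) (fderiv ℝ P u u) 0 :=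
    line_hasDerivAt hD u
  have h2 : HasDerivAt (fun t : ℝ => P (u + t • u)) (P u) 0 := by
    have hg : HasDerivAt (fun t : ℝ => (1 + t) • P u) (P u) 0 := by
      simpa using (((hasDerivAt_id (0:ℝ)).const_add 1).smul_const (P u))
    refine hg.congr_of_eventuallyEq ?_
    filter_upwards [isOpen_Ioi.mem_nhds (by norm_num : (0:ℝ) ∈ Set.Ioi (-1:ℝ))] with t ht
    have h1t : (0:ℝ) ≤ 1 + t := by have : (-1:ℝ) < t := ht; linarith
    have e1 : u + t • u = (1 + t) • u := by module
    rw [e1, proj_homog hne hconv hcone hP h1t u]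
  exact h1.unique h2
theorem clarke_good {K : Set X} (hne : K.Nonempty) (hconv : Convex ℝ K)
    (hcone : ∀ c : ℝ, 0 ≤ c → ∀ y ∈ K, c • y ∈ K)
    {P : X → X} (hP : IsMetricProjection K P) (x : X) {V : X →L[ℝ] X}
    (hV : V ∈ clarkeJacobian P x) :
    (∀ e : X, 0 ≤ ⟪V e, e⟫) ∧ V x = P x ∧
      ∀ z : X, ‖P z - P x - V (z - x)‖ ≤ ‖z - x‖ := by
  have hPc : Continuous P := by
    refine LipschitzWith.continuous (K := 1) (LipschitzWith.of_dist_le_mul fun a c => ?_)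
    rw [dist_eq_norm, dist_eq_norm]
    simpa using proj_lip hconv hP a c
  set G : Set (X →L[ℝ] X) := {W | (∀ e : X, 0 ≤ ⟪W e, e⟫) ∧ W x = P x ∧
      ∀ z : X, ‖P z - P x - W (z - x)‖ ≤ ‖z - x‖} with hG
  suffices h : clarkeJacobian P x ⊆ G from h hV
  refine convexHull_min ?_ ?_
  · rintro W ⟨useq, hdiff, hu, hW⟩
    have happ : ∀ (w : ℕ → X) (l : X), Tendsto w atTop (𝓝 l) →
        Tendsto (fun k => (fderiv ℝ P (useq k)) (w k)) atTop (𝓝 (W l)) := by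
      intro w l hw
      have hcont := (isBoundedBilinearMap_apply :
        IsBoundedBilinearMap ℝ fun p : (X →L[ℝ] X) × X => p.1 p.2).continuous
      exact (hcont.tendsto ((W, l) : (X →L[ℝ] X) × X)).comp (hW.prodMk_nhds hw)
    have h2 : Tendsto (fun k => P (useq k)) atTop (𝓝 (P x)) := (hPc.tendsto x).comp hu
    refine ⟨?_, ?_, ?_⟩
    · intro e
      have hlim : Tendsto (fun k => ⟪(fderiv ℝ P (useq k)) e, e⟫) atTop (𝓝 ⟪W e, e⟫) :=
        Tendsto.inner (𝕜 := ℝ) (happ (fun _ => e) e tendsto_const_nhds) tendsto_const_nhds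
      exact ge_of_tendsto hlim (Eventually.of_forall fun k =>
        proj_fderiv_psd hconv hP (hdiff k) e)
    · have h1 := happ useq x hu
      have heq : (fun k => (fderiv ℝ P (useq k)) (useq k)) = fun k => P (useq k) :=
        funext fun k => proj_fderiv_euler hne hconv hcone hP (hdiff k)
      rw [heq] at h1
      exact tendsto_nhds_unique h1 h2
    · intro z
      have hL : Tendsto (fun k => ‖P z - P (useq k) - (fderiv ℝ P (useq k)) (z - useq k)‖)
          atTop (𝓝 ‖P z - P x - W (z - x)‖) :=
        ((tendsto_const_nhds.sub h2).sub
          (happ (fun k => z - useq k) (z - x) (tendsto_const_nhds.sub hu))).norm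
      have hR : Tendsto (fun k => ‖z - useq k‖) atTop (𝓝 ‖z - x‖) :=
        (tendsto_const_nhds.sub hu).norm
      exact le_of_tendsto_of_tendsto' hL hR fun k =>
        proj_fderiv_est hconv hP (hdiff k) z
  · intro V₁ h₁ V₂ h₂ a c ha hc hac
    refine ⟨?_, ?_, ?_⟩
    · intro e
      have happ : (a • V₁ + c • V₂) e = a • V₁ e + c • V₂ e := by
        simp [ContinuousLinearMap.add_apply, ContinuousLinearMap.smul_apply]
      rw [happ, inner_add_left, real_inner_smul_left, real_inner_smul_left]
      exact add_nonneg (mul_nonneg ha (h₁.1 e)) (mul_nonneg hc (h₂.1 e))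
    · have : (a • V₁ + c • V₂) x = a • P x + c • P x := by
        simp [ContinuousLinearMap.add_apply, ContinuousLinearMap.smul_apply,
          h₁.2.1, h₂.2.1]
      rw [this, ← add_smul, hac, one_smul]
    · intro z
      have hc' : c = 1 - a := by linarith
      subst hc'
      have e0 : P z - P x - (a • V₁ + (1 - a) • V₂) (z - x)
          = a • (P z - P x - V₁ (z - x)) + (1 - a) • (P z - P x - V₂ (z - x)) := by
        have h : (a • V₁ + (1 - a) • V₂) (z - x)
            = a • V₁ (z - x) + (1 - a) • V₂ (z - x) := by
          simp [ContinuousLinearMap.add_apply, ContinuousLinearMap.smul_apply]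
        rw [h]; module
      rw [e0]
      calc ‖a • (P z - P x - V₁ (z - x)) + (1 - a) • (P z - P x - V₂ (z - x))‖
          ≤ ‖a • (P z - P x - V₁ (z - x))‖ + ‖(1 - a) • (P z - P x - V₂ (z - x))‖ :=
            norm_add_le _ _
        _ = a * ‖P z - P x - V₁ (z - x)‖ + (1 - a) * ‖P z - P x - V₂ (z - x)‖ := by
            rw [norm_smul, norm_smul, Real.norm_eq_abs, Real.norm_eq_abs,
              abs_of_nonneg ha, abs_of_nonneg hc]
        _ ≤ a * ‖z - x‖ + (1 - a) * ‖z - x‖ := by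
            have := h₁.2.2 z; have := h₂.2.2 z
            gcongr <;> assumption
        _ = ‖z - x‖ := by ring

/-- If `T` is a self-adjoint positive definite operator with `‖T⁻¹‖ < 1` and `x̄` is the
(unique) solution of `P x + T x = b`, then for every Clarke generalized Jacobian `V` of the
projection, `V + T` is invertible, each Newton step contracts distances to `x̄` by the factor
`‖T⁻¹‖`, and every semi-smooth Newton sequence converges to `x̄` from any starting point. -/
theorem semismoothNewton_Qlinear_convergence_posDef
    (K : Set X) (hne : K.Nonempty) (hcl : IsClosed K) (hconv : Convex ℝ K)
    (hcone : ∀ c : ℝ, 0 ≤ c → ∀ y ∈ K, c • y ∈ K)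
    (P : X → X) (hP : IsMetricProjection K P)
    (T S : X →L[ℝ] X) (hsa : ∀ u w : X, ⟪T u, w⟫ = ⟪u, T w⟫)
    (hpd : ∀ u : X, u ≠ 0 → 0 < ⟪T u, u⟫)
    (hTS : T * S = 1) (hST : S * T = 1) (hS : ‖S‖ < 1)
    (b xb : X) (hxb : P xb + T xb = b) :
    (∀ (x : X) (V : X →L[ℝ] X), V ∈ clarkeJacobian P x →
      IsUnit (V + T) ∧
      ∀ xp : X, (V + T) xp = b → ‖xp - xb‖ ≤ ‖S‖ * ‖x - xb‖) ∧
    (∀ (xs : ℕ → X) (Vs : ℕ → X →L[ℝ] X),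
      (∀ k, Vs k ∈ clarkeJacobian P (xs k)) →
      (∀ k, (Vs k + T) (xs (k + 1)) = b) →
      Tendsto xs atTop (𝓝 xb)) := by
  have hTSapp : ∀ y, T (S y) = y := fun y => by
    have := congrArg (fun L : X →L[ℝ] X => L y) hTS
    simpa [ContinuousLinearMap.mul_apply] using this
  have hSTapp : ∀ y, S (T y) = y := fun y => by
    have := congrArg (fun L : X →L[ℝ] X => L y) hST
    simpa [ContinuousLinearMap.mul_apply] using this
  have hTpsd : ∀ y, 0 ≤ ⟪T y, y⟫ := by
    intro y
    rcases eq_or_ne y 0 with h | h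
    · simp [h]
    · exact le_of_lt (hpd y h)
  have hSsym : ∀ u w : X, ⟪S u, w⟫ = ⟪u, S w⟫ := by
    intro u w
    calc ⟪S u, w⟫ = ⟪S u, T (S w)⟫ := by rw [hTSapp]
      _ = ⟪T (S u), S w⟫ := (hsa (S u) (S w)).symm
      _ = ⟪u, S w⟫ := by rw [hTSapp]
  have hSpsd : ∀ y, 0 ≤ ⟪S y, y⟫ := by
    intro y
    calc (0:ℝ) ≤ ⟪T (S y), S y⟫ := hTpsd (S y)
      _ = ⟪S y, T (S y)⟫ := real_inner_comm _ _
      _ = ⟪S y, y⟫ := by rw [hTSapp]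
  have hTlower : ∀ e : X, e ≠ 0 → ‖e‖ ^ 2 ≤ ‖S‖ * ⟪T e, e⟫ := by
    intro e he
    have hq : ∀ t : ℝ, 0 ≤ ⟪S e, e⟫ * (t * t) + (2 * ‖e‖ ^ 2) * t + ⟪T e, e⟫ := by
      intro t
      have h0 := hSpsd (T e + t • e)
      have hexp : ⟪S (T e + t • e), T e + t • e⟫
          = ⟪S e, e⟫ * (t * t) + (2 * ‖e‖ ^ 2) * t + ⟪T e, e⟫ := by
        rw [map_add, map_smul]
        simp only [inner_add_left, inner_add_right, inner_smul_left, inner_smul_right,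
          RCLike.conj_to_real]
        have e1 : ⟪S (T e), T e⟫ = ⟪T e, e⟫ := by
          rw [hSsym, hSTapp, real_inner_comm]
        have e2 : ⟪S (T e), e⟫ = ‖e‖ ^ 2 := by
          rw [hSTapp, real_inner_self_eq_norm_sq]
        have e3 : ⟪S e, T e⟫ = ‖e‖ ^ 2 := by
          rw [hSsym, hSTapp, real_inner_self_eq_norm_sq]
        rw [e1, e2, e3]
        ring
      linarith [hexp ▸ h0]
    have hdis := discrim_le_zero hq
    rw [discrim] at hdis
    have hSe : ⟪S e, e⟫ ≤ ‖S‖ * ‖e‖ ^ 2 := by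
      calc ⟪S e, e⟫ ≤ ‖S e‖ * ‖e‖ := real_inner_le_norm _ _
        _ ≤ ‖S‖ * ‖e‖ * ‖e‖ := by
            have := S.le_opNorm e
            nlinarith [norm_nonneg e]
        _ = ‖S‖ * ‖e‖ ^ 2 := by ring
    have he2 : 0 < ‖e‖ := norm_pos_iff.mpr he
    nlinarith [hTpsd e, mul_le_mul_of_nonneg_right hSe (hTpsd e), pow_pos he2 2]
  have main1 : ∀ (x : X) (V : X →L[ℝ] X), V ∈ clarkeJacobian P x →
      IsUnit (V + T) ∧ ∀ xp : X, (V + T) xp = b → ‖xp - xb‖ ≤ ‖S‖ * ‖x - xb‖ := by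
    intro x V hV
    obtain ⟨hpsd, hVx, hest⟩ := clarke_good hne hconv hcone hP x hV
    have hinj : Function.Injective (V + T) := by
      intro a₁ a₂ h12
      by_contra hne'
      have hd : a₁ - a₂ ≠ 0 := sub_ne_zero.mpr hne'
      have h0 : (V + T) (a₁ - a₂) = 0 := by rw [map_sub, h12, sub_self]
      have hz : ⟪V (a₁ - a₂), a₁ - a₂⟫ + ⟪T (a₁ - a₂), a₁ - a₂⟫ = 0 := by
        rw [← inner_add_left, ← ContinuousLinearMap.add_apply, h0, inner_zero_left]
      linarith [hpd _ hd, hpsd (a₁ - a₂)]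
    have hbij : Function.Bijective ((V + T) : X →L[ℝ] X).toLinearMap :=
      ⟨hinj, LinearMap.injective_iff_surjective.mp hinj⟩
    let eC := (LinearEquiv.ofBijective ((V + T) : X →L[ℝ] X).toLinearMap hbij).toContinuousLinearEquiv
    have hCoe : ∀ w, eC w = (V + T) w := fun w => rfl
    constructor
    · refine ⟨⟨V + T, eC.symm.toContinuousLinearMap, ?_, ?_⟩, rfl⟩
      · ext w
        have := eC.apply_symm_apply w
        rw [hCoe] at this
        simpa [ContinuousLinearMap.mul_apply] using this
      · ext w
        have := eC.symm_apply_apply w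
        rw [hCoe] at this
        simpa [ContinuousLinearMap.mul_apply] using this
    · intro xp hxp
      set e := xp - xb with hedef
      set d := x - xb with hddef
      have hre : (V + T) e = P xb - P x - V (xb - x) := by
        have h1 : (V + T) e = (V + T) xp - (V + T) xb := map_sub _ _ _
        rw [hxp, ← hxb] at h1
        rw [h1, ContinuousLinearMap.add_apply, map_sub, hVx]
        abel
      have hr : ‖(V + T) e‖ ≤ ‖d‖ := by
        rw [hre]
        calc ‖P xb - P x - V (xb - x)‖ ≤ ‖xb - x‖ := hest xb
          _ = ‖d‖ := by rw [hddef, norm_sub_rev]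
      have hTee : ⟪T e, e⟫ ≤ ‖d‖ * ‖e‖ := by
        have h1 : ⟪(V + T) e, e⟫ = ⟪V e, e⟫ + ⟪T e, e⟫ := by
          rw [ContinuousLinearMap.add_apply, inner_add_left]
        have h2 : ⟪(V + T) e, e⟫ ≤ ‖d‖ * ‖e‖ :=
          le_trans (real_inner_le_norm _ _)
            (mul_le_mul_of_nonneg_right hr (norm_nonneg e))
        linarith [hpsd e]
      rcases eq_or_ne e 0 with h0 | h0
      · rw [show ‖xp - xb‖ = ‖e‖ from rfl, h0, norm_zero]
        positivity
      · have he2 : 0 < ‖e‖ := norm_pos_iff.mpr h0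
        have hlow := hTlower e h0
        have hS0 : (0:ℝ) ≤ ‖S‖ := norm_nonneg S
        show ‖e‖ ≤ ‖S‖ * ‖d‖
        nlinarith [hTee]
  refine ⟨main1, ?_⟩
  intro xs Vs hVs hstepeq
  have hstep : ∀ k, ‖xs (k + 1) - xb‖ ≤ ‖S‖ * ‖xs k - xb‖ := fun k =>
    (main1 (xs k) (Vs k) (hVs k)).2 (xs (k + 1)) (hstepeq k)
  have hbound : ∀ k, ‖xs k - xb‖ ≤ ‖S‖ ^ k * ‖xs 0 - xb‖ := by
    intro k
    induction k with
    | zero => simp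
    | succ n ih =>
      calc ‖xs (n + 1) - xb‖ ≤ ‖S‖ * ‖xs n - xb‖ := hstep n
        _ ≤ ‖S‖ * (‖S‖ ^ n * ‖xs 0 - xb‖) :=
            mul_le_mul_of_nonneg_left ih (norm_nonneg S)
        _ = ‖S‖ ^ (n + 1) * ‖xs 0 - xb‖ := by ring
  have hgeo : Tendsto (fun k => ‖S‖ ^ k * ‖xs 0 - xb‖) atTop (𝓝 0) := by
    have := (tendsto_pow_atTop_nhds_zero_of_lt_one (norm_nonneg S) hS).mul_const ‖xs 0 - xb‖
    simpa using this
  have hzero : Tendsto (fun k => ‖xs k - xb‖) atTop (𝓝 0) :=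
    squeeze_zero (fun k => norm_nonneg _) hbound hgeo
  exact tendsto_iff_norm_sub_tendsto_zero.mpr hzero
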